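/- arXiv:2201.10151 — 2 statements merged into one kernel-verified Lean document; each statement's English description precedes it below -/
import Mathlib

section
/- Under Assumption (A), for every nonzero measure μ ∈ M₊(W_S) one has j_S(μS_1) = j_S(μ); consequently, for every x ∈ D, the sequence (j_S(X_n))_{n≥0} is ℙ_x-almost surely non-increasing (with the convention j_S(∂) := 0). -/
open MeasureTheory ProbabilityTheory Filter ENNReal

variable {α : Type*} [MeasurableSpace α]

noncomputable def kmass (S : ℕ → Kernel α α) (n : ℕ) (μ : Measure α) : ℝ≥0∞ :=
  Measure.bind μ (fun x => S n x) Set.univ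

noncomputable def expParam (S : ℕ → Kernel α α) (μ : Measure α) : ℝ≥0∞ :=
  sInf {θ : ℝ≥0∞ | Filter.liminf (fun n : ℕ => θ⁻¹ ^ n * kmass S n μ) Filter.atTop = 0}

noncomputable def theta0 (S : ℕ → Kernel α α) : ℝ≥0∞ :=
  ⨆ x : α, expParam S (Measure.dirac x)

noncomputable def polyParam (S : ℕ → Kernel α α) (μ : Measure α) : ℝ :=
  sInf {l : ℝ | 0 ≤ l ∧
    Filter.liminf (fun n : ℕ => (n : ℝ≥0∞) ^ (-l) * (theta0 S)⁻¹ ^ n * kmass S n μ)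
      Filter.atTop = 0}

noncomputable def jfun (S : ℕ → Kernel α α) (x : α) : ℝ :=
  polyParam S (Measure.dirac x)

def IsSubMarkovSemigroup (S : ℕ → Kernel α α) : Prop :=
  S 0 = Kernel.id ∧ (∀ n m, S (n + m) = (S m) ∘ₖ (S n)) ∧ ∀ n x, (S n) x Set.univ ≤ 1

/-- **Assumption (A)** of Champagnat–Villemonais, for the sub-Markovian semigroup `S`,
with weight function `W`, probability measures `ν i`, functions `η i` (`i` in the finite or
countable index set `I`) and rate sequence `a`. -/
structure AssumptionA (S : ℕ → Kernel α α) {I : Type} (W : α → ℝ)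
    (ν : I → Measure α) (η : I → α → ℝ) (a : ℕ → ℝ) : Prop where
  countable : Countable I
  theta0_pos : 0 < theta0 S
  theta0_le_one : theta0 S ≤ 1
  j_nat : ∀ x : α, ∃ k : ℕ, jfun S x = (k : ℝ)
  W_meas : Measurable W
  one_le_W : ∀ x, 1 ≤ W x
  nu_prob : ∀ i, IsProbabilityMeasure (ν i)
  nu_W : ∀ i, ∫⁻ x, ENNReal.ofReal (W x) ∂(ν i) ≠ ∞
  eta_meas : ∀ i, Measurable (η i)
  eta_nonneg : ∀ i x, 0 ≤ η i x
  eta_ne_zero : ∀ i, η i ≠ 0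
  eta_bdd : ∀ i, ∃ C : ℝ, ∀ x, η i x ≤ C * W x
  summable_etanu : ∀ x, Summable (fun i => η i x * (∫⁻ y, ENNReal.ofReal (W y) ∂(ν i)).toReal)
  etanu_bdd : ∃ C : ℝ, ∀ x,
    (∑' i, η i x * (∫⁻ y, ENNReal.ofReal (W y) ∂(ν i)).toReal) ≤ C * W x
  SW_fin : ∀ n x, ∫⁻ y, ENNReal.ofReal (W y) ∂(S n x) ≠ ∞
  a_nonneg : ∀ n, 0 ≤ a n
  a_tendsto : Tendsto a atTop (nhds 0)
  approx : ∀ f : α → ℝ, Measurable f → ∀ c : ℝ, 0 ≤ c → (∀ x, |f x| ≤ c * W x) →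
    ∀ n : ℕ, 1 ≤ n → ∀ x : α,
      |((theta0 S).toReal)⁻¹ ^ n * (n : ℝ) ^ (-(jfun S x)) * (∫ y, f y ∂(S n x)) -
        ∑' i, η i x * ∫ y, f y ∂(ν i)| ≤ a n * W x * c

/-- `ν` is a quasi-stationary distribution for `S`. -/
def IsQSD (S : ℕ → Kernel α α) (ν : Measure α) : Prop :=
  IsProbabilityMeasure ν ∧ ∀ n, kmass S n ν ≠ 0 ∧
    Measure.bind ν (fun x => S n x) = kmass S n ν • ν
/-!
The exponent `j_S(μ)` only depends on the tail of `n ↦ μ S_n 𝟙`, and `(μ S_1) S_n = μ S_{n+1}`;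
shifting the index by one changes `n^(-l) θ₀^(-n)` by a factor bounded above and below, so
`j_S(μ S_1) = j_S(μ)`.

For the monotonicity, fix `y` and `l := j_S(y) + 1/2`. Since `j_S(y) + 1` belongs to the defining
set of `j_S(y)` (this is where Assumption (A), applied to `f = 1`, enters) and that set is an
up-set, `l` belongs to it, hence to the defining set of `δ_y S_1`. By Fatou's lemma, `S_1(y, ·)`
can then charge no set of points `z` at which `l` fails, and because `j_S` is integer valued these
are all the points with `j_S(z) > j_S(y)`.
-/

def polyParamSet (S : ℕ → Kernel α α) (μ : Measure α) : Set ℝ :=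
  {l : ℝ | 0 ≤ l ∧
    Filter.liminf (fun n : ℕ => (n : ℝ≥0∞) ^ (-l) * (theta0 S)⁻¹ ^ n * kmass S n μ)
      Filter.atTop = 0}

lemma polyParam_eq_sInf (S : ℕ → Kernel α α) (μ : Measure α) :
    polyParam S μ = sInf (polyParamSet S μ) := rfl

lemma kmass_eq_lintegral (S : ℕ → Kernel α α) (n : ℕ) (μ : Measure α) :
    kmass S n μ = ∫⁻ x, S n x Set.univ ∂μ :=
  Measure.bind_apply MeasurableSet.univ (S n).measurable.aemeasurable

lemma kmass_dirac (S : ℕ → Kernel α α) (n : ℕ) (z : α) :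
    kmass S n (Measure.dirac z) = S n z Set.univ := by
  rw [kmass_eq_lintegral, lintegral_dirac' z ((S n).measurable_coe MeasurableSet.univ)]

lemma kmass_bind_one {S : ℕ → Kernel α α} (hS : IsSubMarkovSemigroup S) (μ : Measure α)
    (n : ℕ) :
    kmass S n (Measure.bind μ (fun x => S 1 x)) = kmass S (n + 1) μ := by
  have hcomp : ∀ x, (S 1 x).bind (fun y => S n y) = S (n + 1) x := fun x => by
    rw [Nat.add_comm n 1, hS.2.1 1 n, Kernel.comp_apply]
  simp only [kmass, Measure.bind_bind (S 1).measurable.aemeasurable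
    (S n).measurable.aemeasurable, hcomp]

lemma liminf_eq_zero_of_le_const_mul {u v : ℕ → ℝ≥0∞} {K : ℝ≥0∞} (hK : K ≠ ∞)
    (h : ∀ᶠ n in atTop, u n ≤ K * v n) (hv : liminf v atTop = 0) :
    liminf u atTop = 0 :=
  le_antisymm
    ((liminf_le_liminf h).trans_eq (by rw [liminf_const_mul_of_ne_top hK, hv, mul_zero]))
    zero_le

lemma natCast_succ_rpow_neg_le {l : ℝ} (hl : 0 ≤ l) (n : ℕ) :
    ((n + 1 : ℕ) : ℝ≥0∞) ^ (-l) ≤ (n : ℝ≥0∞) ^ (-l) := by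
  rw [ENNReal.rpow_neg, ENNReal.rpow_neg]
  exact ENNReal.inv_le_inv.2 (ENNReal.rpow_le_rpow (by exact_mod_cast n.le_succ) hl)

lemma natCast_rpow_neg_le_two_rpow_mul {l : ℝ} (hl : 0 ≤ l) {n : ℕ} (hn : 1 ≤ n) :
    (n : ℝ≥0∞) ^ (-l) ≤ 2 ^ l * ((n + 1 : ℕ) : ℝ≥0∞) ^ (-l) := by
  have hsucc : ((n + 1 : ℕ) : ℝ≥0∞) ^ l ≤ 2 ^ l * (n : ℝ≥0∞) ^ l := by
    rw [← ENNReal.mul_rpow_of_nonneg _ _ hl]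
    gcongr
    push_cast
    rw [two_mul]
    gcongr
    exact_mod_cast hn
  have h2 : (2 : ℝ≥0∞) ^ l ≠ 0 := (ENNReal.rpow_pos two_pos ofNat_ne_top).ne'
  have h2' : (2 : ℝ≥0∞) ^ l ≠ ∞ := ENNReal.rpow_ne_top_of_nonneg hl ofNat_ne_top
  calc (n : ℝ≥0∞) ^ (-l) = 2 ^ l * (2 ^ l * (n : ℝ≥0∞) ^ l)⁻¹ := by
        rw [ENNReal.mul_inv (.inl h2) (.inl h2'), ← mul_assoc, ENNReal.mul_inv_cancel h2 h2',
          one_mul, ENNReal.rpow_neg]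
    _ ≤ 2 ^ l * ((n + 1 : ℕ) : ℝ≥0∞) ^ (-l) := by
        rw [ENNReal.rpow_neg]
        gcongr

lemma liminf_natCast_rpow_neg_add_one_mul_eq_zero {u : ℕ → ℝ≥0∞} {l : ℝ} {C : ℝ≥0∞}
    (hC : C ≠ ∞) (h : ∀ᶠ n : ℕ in atTop, (n : ℝ≥0∞) ^ (-l) * u n ≤ C) :
    liminf (fun n : ℕ => (n : ℝ≥0∞) ^ (-(l + 1)) * u n) atTop = 0 := by
  have hbound : ∀ᶠ n : ℕ in atTop, (n : ℝ≥0∞) ^ (-(l + 1)) * u n ≤ (n : ℝ≥0∞)⁻¹ * C := by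
    filter_upwards [h, eventually_ge_atTop 1] with n hn hn1
    have hn0 : (n : ℝ≥0∞) ≠ 0 := by exact_mod_cast (zero_lt_one.trans_le hn1).ne'
    rw [neg_add, ENNReal.rpow_add _ _ hn0 (natCast_ne_top n), ENNReal.rpow_neg_one,
      mul_comm ((n : ℝ≥0∞) ^ (-l)), mul_assoc]
    gcongr
  have hlim : Tendsto (fun n : ℕ => (n : ℝ≥0∞)⁻¹ * C) atTop (nhds 0) := by
    simpa using ENNReal.Tendsto.mul_const ENNReal.tendsto_inv_nat_nhds_zero (.inr hC)
  exact (tendsto_of_tendsto_of_tendsto_of_le_of_le' tendsto_const_nhds hlim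
    (.of_forall fun _ => zero_le) hbound).liminf_eq

lemma polyParam_nonneg (S : ℕ → Kernel α α) (μ : Measure α) : 0 ≤ polyParam S μ :=
  Real.sInf_nonneg fun _ hl => hl.1

section PolyParamSet

variable {S : ℕ → Kernel α α} {μ : Measure α} {l l' : ℝ}

lemma mem_polyParamSet_of_le (h : l ∈ polyParamSet S μ) (hle : l ≤ l') :
    l' ∈ polyParamSet S μ := by
  refine ⟨h.1.trans hle, le_antisymm ((liminf_le_liminf ?_).trans_eq h.2) zero_le⟩
  filter_upwards [eventually_ge_atTop 1] with n hn
  gcongr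
  exact_mod_cast hn

lemma notMem_polyParamSet_of_lt_polyParam (hl : l < polyParam S μ) :
    l ∉ polyParamSet S μ :=
  fun h => hl.not_ge (csInf_le ⟨0, fun _ hx => hx.1⟩ h)

lemma mem_polyParamSet_of_polyParam_lt (hne : (polyParamSet S μ).Nonempty)
    (hl : polyParam S μ < l) : l ∈ polyParamSet S μ := by
  obtain ⟨l₀, hl₀, hlt⟩ := exists_lt_of_csInf_lt hne hl
  exact mem_polyParamSet_of_le hl₀ hlt.le

lemma polyParamSet_bind_one (hS : IsSubMarkovSemigroup S) (h0 : theta0 S ≠ 0)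
    (htop : theta0 S ≠ ∞) (μ : Measure α) :
    polyParamSet S (Measure.bind μ (fun x => S 1 x)) = polyParamSet S μ := by
  ext l
  simp only [polyParamSet, Set.mem_ofPred_eq, kmass_bind_one hS]
  refine and_congr_right fun hl => ?_
  set t := (theta0 S)⁻¹
  have ht : t ≠ ∞ := ENNReal.inv_ne_top.2 h0
  rw [← liminf_nat_add (fun n : ℕ => (n : ℝ≥0∞) ^ (-l) * t ^ n * kmass S n μ) 1]
  constructor
  · refine liminf_eq_zero_of_le_const_mul ht (.of_forall fun n => ?_)
    calc ((n + 1 : ℕ) : ℝ≥0∞) ^ (-l) * t ^ (n + 1) * kmass S (n + 1) μ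
        ≤ (n : ℝ≥0∞) ^ (-l) * t ^ (n + 1) * kmass S (n + 1) μ := by
          gcongr ?_ * _ * _; exact natCast_succ_rpow_neg_le hl n
      _ = t * ((n : ℝ≥0∞) ^ (-l) * t ^ n * kmass S (n + 1) μ) := by ring
  · refine liminf_eq_zero_of_le_const_mul (K := 2 ^ l * theta0 S)
      (mul_ne_top (rpow_ne_top_of_nonneg hl ofNat_ne_top) htop) ?_
    filter_upwards [eventually_ge_atTop 1] with n hn
    have hpow : t ^ n = theta0 S * t ^ (n + 1) := by
      rw [pow_succ, ← mul_assoc, mul_comm _ (t ^ n), mul_assoc, ENNReal.mul_inv_cancel h0 htop,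
        mul_one]
    calc (n : ℝ≥0∞) ^ (-l) * t ^ n * kmass S (n + 1) μ
        ≤ 2 ^ l * ((n + 1 : ℕ) : ℝ≥0∞) ^ (-l) * t ^ n * kmass S (n + 1) μ := by
          gcongr ?_ * _ * _; exact natCast_rpow_neg_le_two_rpow_mul hl hn
      _ = 2 ^ l * theta0 S *
          (((n + 1 : ℕ) : ℝ≥0∞) ^ (-l) * t ^ (n + 1) * kmass S (n + 1) μ) := by
          rw [hpow]; ring

lemma polyParam_bind_one (hS : IsSubMarkovSemigroup S) (h0 : theta0 S ≠ 0)
    (htop : theta0 S ≠ ∞) (μ : Measure α) :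
    polyParam S (Measure.bind μ (fun x => S 1 x)) = polyParam S μ := by
  rw [polyParam_eq_sInf, polyParam_eq_sInf, polyParamSet_bind_one hS h0 htop]

lemma measure_setOf_notMem_polyParamSet_dirac_eq_zero (hl : l ∈ polyParamSet S μ) :
    μ {z | l ∉ polyParamSet S (Measure.dirac z)} = 0 := by
  set g : ℕ → α → ℝ≥0∞ := fun n z => (n : ℝ≥0∞) ^ (-l) * (theta0 S)⁻¹ ^ n * S n z Set.univ
  have hg : ∀ n, Measurable (g n) := fun n =>
    ((S n).measurable_coe MeasurableSet.univ).const_mul _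
  have hfatou : ∫⁻ z, liminf (fun n => g n z) atTop ∂μ = 0 := by
    refine le_antisymm ((lintegral_liminf_le hg).trans_eq ?_) zero_le
    simpa only [g, kmass_eq_lintegral, lintegral_const_mul _
      ((S _).measurable_coe MeasurableSet.univ)] using hl.2
  have hae := (lintegral_eq_zero_iff (.liminf hg)).1 hfatou
  refine measure_mono_null (fun z hz => ?_) (ae_iff.1 hae)
  exact fun hz0 => hz ⟨hl.1, by simpa only [kmass_dirac, Pi.zero_apply] using hz0⟩

end PolyParamSet

namespace AssumptionA

variable {S : ℕ → Kernel α α} {I : Type} {W : α → ℝ} {ν : I → Measure α} {η : I → α → ℝ}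
  {a : ℕ → ℝ}

lemma theta0_ne_top (hA : AssumptionA S W ν η a) : theta0 S ≠ ∞ :=
  ne_top_of_le_ne_top one_ne_top hA.theta0_le_one

lemma jfun_add_one_mem_polyParamSet (hS : IsSubMarkovSemigroup S)
    (hA : AssumptionA S W ν η a) (y : α) :
    jfun S y + 1 ∈ polyParamSet S (Measure.dirac y) := by
  set j := jfun S y
  set θ := theta0 S
  have hθ0 : θ ≠ 0 := hA.theta0_pos.ne'
  have hθ : θ ≠ ∞ := hA.theta0_ne_top
  set T := ∑' i, η i y * (ν i Set.univ).toReal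
  have hreal : ∀ n : ℕ, 1 ≤ n →
      θ.toReal⁻¹ ^ n * (n : ℝ) ^ (-j) * (S n y Set.univ).toReal ≤ T + a n * W y := by
    intro n hn
    have h := hA.approx (fun _ => 1) measurable_const 1 zero_le_one
      (fun x => by simpa using hA.one_le_W x) n hn y
    simp only [integral_const, smul_eq_mul, mul_one, measureReal_def] at h
    linarith [le_abs_self (θ.toReal⁻¹ ^ n * (n : ℝ) ^ (-j) * (S n y Set.univ).toReal - T)]
  have hofReal : ∀ n : ℕ, 1 ≤ n → (n : ℝ≥0∞) ^ (-j) * (θ⁻¹ ^ n * kmass S n (Measure.dirac y)) =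
      ENNReal.ofReal (θ.toReal⁻¹ ^ n * (n : ℝ) ^ (-j) * (S n y Set.univ).toReal) := by
    intro n hn
    have hn0 : (0 : ℝ) < n := by exact_mod_cast hn
    rw [ENNReal.ofReal_mul (by positivity), ENNReal.ofReal_mul (by positivity),
      ENNReal.ofReal_pow (by positivity), ENNReal.ofReal_inv_of_pos (toReal_pos hθ0 hθ),
      ofReal_toReal hθ, ← ENNReal.ofReal_rpow_of_pos hn0, ofReal_natCast,
      ofReal_toReal (ne_top_of_le_ne_top one_ne_top (hS.2.2 n y)), kmass_dirac]
    ring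
  have hj : 0 ≤ j := polyParam_nonneg S _
  refine ⟨by linarith, ?_⟩
  simp only [mul_assoc]
  refine liminf_natCast_rpow_neg_add_one_mul_eq_zero (C := ENNReal.ofReal (T + W y))
    ofReal_ne_top ?_
  filter_upwards [eventually_ge_atTop 1, hA.a_tendsto.eventually_lt_const zero_lt_one]
    with n hn han
  rw [hofReal n hn]
  refine ENNReal.ofReal_le_ofReal ((hreal n hn).trans ?_)
  nlinarith [hA.one_le_W y]

lemma kernel_one_jfun_lt_eq_zero (hS : IsSubMarkovSemigroup S) (hA : AssumptionA S W ν η a)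
    (y : α) :
    S 1 y {z | jfun S y < jfun S z} = 0 := by
  set l := jfun S y + 2⁻¹
  have hl_dirac : l ∈ polyParamSet S (Measure.dirac y) :=
    mem_polyParamSet_of_polyParam_lt ⟨_, hA.jfun_add_one_mem_polyParamSet hS y⟩
      (by change jfun S y < l; norm_num [l])
  have hl : l ∈ polyParamSet S (S 1 y) := by
    rwa [← Measure.dirac_bind (S 1).measurable y,
      polyParamSet_bind_one hS hA.theta0_pos.ne' hA.theta0_ne_top]
  refine measure_mono_null (fun z hz => ?_) (measure_setOf_notMem_polyParamSet_dirac_eq_zero hl)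
  obtain ⟨ky, hky⟩ := hA.j_nat y
  obtain ⟨kz, hkz⟩ := hA.j_nat z
  have hk : (ky : ℝ) + 1 ≤ kz := by
    have : (ky : ℝ) < kz := by rwa [← hky, ← hkz]
    exact_mod_cast Nat.cast_lt.1 this
  refine notMem_polyParamSet_of_lt_polyParam (show l < jfun S z from ?_)
  simp only [l, hky, hkz]
  linarith

end AssumptionA

/-- Under Assumption (A), `j_S(μ S_1) = j_S(μ)` for every nonzero
`μ ∈ M₊(W_S)`; consequently, for every `x ∈ D`, the sequence `(j_S(X_n))_{n ≥ 0}` is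
`ℙ_x`-almost surely non-increasing (with the convention `j_S(∂) = 0`), i.e. for every `n`,
the probability, starting from `x`, that the polynomial parameter strictly increases between
times `n` and `n+1` vanishes. -/
theorem polyParam_bind_eq_and_ae_nonincreasing
    (S : ℕ → Kernel α α) (hS : IsSubMarkovSemigroup S)
    {I : Type} {W : α → ℝ} {ν : I → Measure α} {η : I → α → ℝ} {a : ℕ → ℝ}
    (hA : AssumptionA S W ν η a) :
    (∀ μ : Measure α, μ ≠ 0 → (∫⁻ x, ENNReal.ofReal (W x) ∂μ) ≠ ∞ →
      polyParam S (Measure.bind μ (fun x => S 1 x)) = polyParam S μ) ∧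
    (∀ x : α, ∀ n : ℕ,
      ∫⁻ y, (S 1 y) {z | jfun S y < jfun S z}
        ∂(Measure.bind (Measure.dirac x) (fun x' => S n x')) = 0) :=
  ⟨fun μ _ _ => polyParam_bind_one hS hA.theta0_pos.ne' hA.theta0_ne_top μ,
    fun _ _ => by simp only [hA.kernel_one_jfun_lt_eq_zero hS, lintegral_zero]⟩
end

section
/- Under Assumption (A), for every n ≥ 1 and every nonnegative measure μ ∈ M₊(W_S) with μ(η_S) > 0 and μ(n^{j_S(·)} W_S) < ∞, the total variation distance between ℙ_μ(X_n ∈ · | n < τ_∂) and the probability measure (Σ_{i∈I_S} μ(n^{j_S(·)} η_{S,i}) ν_{S,i}) / (Σ_{i∈I_S} μ(n^{j_S(·)} η_{S,i})) is at most 2 α_{S,n} μ(n^{j_S(·)} W_S) / μ(n^{j_S(·)} η_S). -/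
open MeasureTheory ProbabilityTheory Filter ENNReal

variable {α : Type*} [MeasurableSpace α]

/-!
Put `ρ := n^{j_S(·)} μ` (`polyWeighted`). Integrating the uniform estimate of Assumption (A)
against `ρ` gives, for every test function `|φ| ≤ 1`,
`|θ₀⁻ⁿ ρ(n^{-j_S} S_n φ) - Σᵢ ρ(η_i) ν_i(φ)| ≤ αₙ ρ(W)`, and the weight cancels:
`ρ(n^{-j_S} S_n φ) = μ S_n φ`. With `φ = f` and `φ = 1` this compares numerator and denominator
of `μ S_n f / μ S_n 1` with those of the limit law (up to the common factor `θ₀⁻ⁿ`), and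
`|a/b - c/d| ≤ 2e/d` whenever `|a| ≤ b`, `|a - c| ≤ e` and `|b - d| ≤ e`.
-/

lemma abs_div_sub_div_le {K : Type*} [Field K] [LinearOrder K] [IsStrictOrderedRing K]
    {A Af B Bf e : K} (hB : 0 < B) (hAf : |Af| ≤ A) (hf : |Af - Bf| ≤ e) (h1 : |A - B| ≤ e) :
    |Af / A - Bf / B| ≤ 2 * e / B := by
  have hq : |Af / A| ≤ 1 := by
    rw [abs_div]
    exact div_le_one_of_le₀ (hAf.trans (le_abs_self A)) (abs_nonneg A)
  have hsplit : Af / A - Bf / B = (Af / A * (B - A) + (Af - Bf)) / B := by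
    rcases eq_or_ne A 0 with rfl | hA
    · simp [abs_nonpos_iff.1 hAf, neg_div]
    · field_simp
      ring
  rw [hsplit, abs_div, abs_of_pos hB]
  gcongr
  calc |Af / A * (B - A) + (Af - Bf)| ≤ 1 * |B - A| + e := by
        grw [abs_add_le, abs_mul, hq, hf]
    _ ≤ 2 * e := by rw [abs_sub_comm]; linarith

lemma measurable_tsum_of_summable {ι E : Type*} [Countable ι] [NormedAddCommGroup E]
    [MeasurableSpace E] [BorelSpace E] [SecondCountableTopology E] {f : ι → α → E}
    (hf : ∀ i, Measurable (f i)) (hs : ∀ x, Summable (f · x)) :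
    Measurable fun x => ∑' i, f i x :=
  measurable_of_tendsto_metrizable' atTop (fun s => Finset.measurable_sum s fun i _ => hf i)
    (tendsto_pi_nhds.2 fun x => (hs x).hasSum)

lemma integral_bind_kernel {β E : Type*} [MeasurableSpace β] [NormedAddCommGroup E]
    [NormedSpace ℝ E] {μ : Measure α} {κ : Kernel α β} {f : β → E}
    (hf : Integrable f (κ ∘ₘ μ)) :
    ∫ y, f y ∂(κ ∘ₘ μ) = ∫ x, ∫ y, f y ∂(κ x) ∂μ := by
  rw [Measure.comp_eq_comp_const_apply, Kernel.integral_comp]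
  · simp
  · rwa [← Measure.comp_eq_comp_const_apply]

def polyRateSet (S : ℕ → Kernel α α) (x : α) : Set ℝ :=
  {l : ℝ | 0 ≤ l ∧
    liminf (fun n : ℕ => (n : ℝ≥0∞) ^ (-l) * (theta0 S)⁻¹ ^ n * S n x Set.univ) atTop = 0}

lemma jfun_eq_sInf_polyRateSet (S : ℕ → Kernel α α) (x : α) :
    jfun S x = sInf (polyRateSet S x) := by
  simp only [jfun, polyParam, polyRateSet, kmass, Measure.dirac_bind (S _).measurable]

lemma polyRateSet_mono {S : ℕ → Kernel α α} {x : α} {l l' : ℝ} (hl : l ∈ polyRateSet S x)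
    (hll' : l ≤ l') : l' ∈ polyRateSet S x := by
  refine ⟨hl.1.trans hll', le_antisymm ?_ zero_le⟩
  rw [← hl.2]
  refine liminf_le_liminf (eventually_ge_atTop 1 |>.mono fun n hn => ?_)
  gcongr
  exact_mod_cast hn

lemma polyRateSet_bddBelow (S : ℕ → Kernel α α) (x : α) : BddBelow (polyRateSet S x) :=
  ⟨0, fun _ hl => hl.1⟩

-- Without nonemptiness `sInf (polyRateSet S x)` would be the junk value `sInf ∅ = 0`, and
-- `jfun S x < q` would no longer be witnessed by a rational rate below `q`.
lemma measurable_jfun_of_nonempty {S : ℕ → Kernel α α} (h : ∀ x, (polyRateSet S x).Nonempty) :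
    Measurable (jfun S) := by
  refine measurable_of_Iio fun q => ?_
  have hset : jfun S ⁻¹' Set.Iio q = ⋃ (l : ℚ) (_ : 0 ≤ (l : ℝ) ∧ (l : ℝ) < q),
      {x | liminf (fun n : ℕ => (n : ℝ≥0∞) ^ (-(l : ℝ)) * (theta0 S)⁻¹ ^ n * S n x Set.univ)
        atTop = 0} := by
    ext x
    simp only [Set.mem_preimage, Set.mem_Iio, Set.mem_iUnion, Set.mem_ofPred_eq,
      jfun_eq_sInf_polyRateSet, exists_prop]
    constructor
    · intro hq
      obtain ⟨l₀, hl₀, hl₀q⟩ := (csInf_lt_iff (polyRateSet_bddBelow S x) (h x)).1 hq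
      obtain ⟨l, hl₀l, hlq⟩ := exists_rat_btwn hl₀q
      exact ⟨l, ⟨hl₀.1.trans hl₀l.le, hlq⟩, (polyRateSet_mono hl₀ hl₀l.le).2⟩
    · rintro ⟨l, ⟨hl0, hlq⟩, hlim⟩
      exact (csInf_le (polyRateSet_bddBelow S x) ⟨hl0, hlim⟩).trans_lt hlq
  rw [hset]
  refine MeasurableSet.iUnion fun l => MeasurableSet.iUnion fun _ => ?_
  refine measurableSet_eq_fun (Measurable.liminf fun n => ?_) measurable_const
  exact measurable_const.mul (Kernel.measurable_coe (S n) MeasurableSet.univ)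

lemma IsSubMarkovSemigroup.isFiniteKernel {S : ℕ → Kernel α α} (hS : IsSubMarkovSemigroup S)
    (n : ℕ) : IsFiniteKernel (S n) :=
  ⟨⟨1, one_lt_top, hS.2.2 n⟩⟩

-- The paper's `h ↦ μ(n^{j_S(·)} h)`.
noncomputable def polyWeighted (S : ℕ → Kernel α α) (n : ℕ) (μ : Measure α) : Measure α :=
  μ.withDensity fun x => (n : ℝ≥0∞) ^ jfun S x

section polyWeighted

variable {S : ℕ → Kernel α α} {n : ℕ} {μ : Measure α}

lemma lintegral_polyWeighted (hj : Measurable (jfun S)) {h : α → ℝ≥0∞} (hh : Measurable h) :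
    ∫⁻ x, h x ∂(polyWeighted S n μ) = ∫⁻ x, (n : ℝ≥0∞) ^ jfun S x * h x ∂μ :=
  lintegral_withDensity_eq_lintegral_mul μ (measurable_const.pow hj) hh

lemma toReal_lintegral_eq_integral_polyWeighted (hj : Measurable (jfun S)) {h : α → ℝ}
    (hh : Measurable h) (h0 : ∀ x, 0 ≤ h x) :
    (∫⁻ x, (n : ℝ≥0∞) ^ jfun S x * ENNReal.ofReal (h x) ∂μ).toReal =
      ∫ x, h x ∂(polyWeighted S n μ) := by
  rw [integral_eq_lintegral_of_nonneg_ae (ae_of_all _ h0) hh.aestronglyMeasurable,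
    lintegral_polyWeighted hj hh.ennreal_ofReal]

lemma integrable_polyWeighted (hj : Measurable (jfun S)) {h : α → ℝ} (hh : Measurable h)
    (h0 : ∀ x, 0 ≤ h x) (hfin : ∫⁻ x, (n : ℝ≥0∞) ^ jfun S x * ENNReal.ofReal (h x) ∂μ ≠ ∞) :
    Integrable h (polyWeighted S n μ) := by
  refine ⟨hh.aestronglyMeasurable, (hasFiniteIntegral_iff_ofReal (ae_of_all _ h0)).2 ?_⟩
  rw [lintegral_polyWeighted hj hh.ennreal_ofReal]
  exact hfin.lt_top

lemma le_polyWeighted (hn : 1 ≤ n) (hj0 : ∀ x, 0 ≤ jfun S x) : μ ≤ polyWeighted S n μ := by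
  calc μ = μ.withDensity 1 := withDensity_one.symm
    _ ≤ _ := withDensity_mono (ae_of_all _ fun x => by
        simpa using ENNReal.rpow_le_rpow (Nat.one_le_cast.2 hn) (hj0 x))

lemma integral_polyWeighted_rescaled (hj : Measurable (jfun S)) (hn : n ≠ 0)
    [IsFiniteMeasure μ] [IsFiniteKernel (S n)] (c : ℝ) {φ : α → ℝ} (hφ : Measurable φ)
    (hφ1 : ∀ x, |φ x| ≤ 1) :
    ∫ x, c * (n : ℝ) ^ (-jfun S x) * ∫ y, φ y ∂(S n x) ∂(polyWeighted S n μ) =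
      c * ∫ y, φ y ∂(S n ∘ₘ μ) := by
  have hn' : (0 : ℝ) < n := by exact_mod_cast Nat.pos_of_ne_zero hn
  rw [polyWeighted, integral_withDensity_eq_integral_toReal_smul (measurable_const.pow hj)
    (ae_of_all _ fun x => (ENNReal.rpow_ne_top_of_ne_zero (by simpa using hn) (by simp)).lt_top),
    integral_bind_kernel (Integrable.of_bound hφ.aestronglyMeasurable 1 (ae_of_all _ hφ1)),
    ← integral_const_mul]
  refine integral_congr_ae (ae_of_all _ fun x => ?_)
  simp only [smul_eq_mul, ← ENNReal.toReal_rpow, ENNReal.toReal_natCast, Real.rpow_neg hn'.le]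
  field_simp

end polyWeighted

namespace AssumptionA

variable {S : ℕ → Kernel α α} {I : Type} {W : α → ℝ} {ν : I → Measure α} {η : I → α → ℝ}
  {a : ℕ → ℝ}

lemma jfun_nonneg (hA : AssumptionA S W ν η a) (x : α) : 0 ≤ jfun S x := by
  obtain ⟨k, hk⟩ := hA.j_nat x
  exact hk ▸ k.cast_nonneg

lemma one_le_toReal_lintegral_W (hA : AssumptionA S W ν η a) (i : I) :
    1 ≤ (∫⁻ y, ENNReal.ofReal (W y) ∂(ν i)).toReal := by
  have := hA.nu_prob i
  have h1 : 1 ≤ ∫⁻ y, ENNReal.ofReal (W y) ∂(ν i) := by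
    calc 1 = ∫⁻ _, 1 ∂(ν i) := by simp
      _ ≤ _ := lintegral_mono fun y => ENNReal.one_le_ofReal.2 (hA.one_le_W y)
  simpa using ENNReal.toReal_mono (hA.nu_W i) h1

lemma summable_eta_mul (hA : AssumptionA S W ν η a) (x : α) {c : I → ℝ}
    (hc : ∀ i, |c i| ≤ 1) : Summable fun i => η i x * c i := by
  refine (hA.summable_etanu x).of_norm_bounded fun i => ?_
  rw [Real.norm_eq_abs, abs_mul, abs_of_nonneg (hA.eta_nonneg i x)]
  gcongr
  · exact hA.eta_nonneg i x
  · exact (hc i).trans (hA.one_le_toReal_lintegral_W i)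

lemma summable_eta (hA : AssumptionA S W ν η a) (x : α) : Summable fun i => η i x := by
  simpa using hA.summable_eta_mul x (c := 1) (by simp)

lemma abs_tsum_eta_mul_le (hA : AssumptionA S W ν η a) (x : α) {c : I → ℝ}
    (hc : ∀ i, |c i| ≤ 1) : |∑' i, η i x * c i| ≤ ∑' i, η i x := by
  have hnorm : Summable fun i => ‖η i x * c i‖ := (hA.summable_eta_mul x hc).norm
  refine (norm_tsum_le_tsum_norm hnorm).trans (hnorm.tsum_le_tsum (fun i => ?_) (hA.summable_eta x))
  rw [Real.norm_eq_abs, abs_mul, abs_of_nonneg (hA.eta_nonneg i x)]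
  exact mul_le_of_le_one_right (hA.eta_nonneg i x) (hc i)

lemma exists_tsum_eta_le (hA : AssumptionA S W ν η a) : ∃ C : ℝ, ∀ x, ∑' i, η i x ≤ C * W x := by
  obtain ⟨C, hC⟩ := hA.etanu_bdd
  refine ⟨C, fun x => le_trans ?_ (hC x)⟩
  refine (hA.summable_eta x).tsum_le_tsum (fun i => ?_) (hA.summable_etanu x)
  exact le_mul_of_one_le_right (hA.eta_nonneg i x) (hA.one_le_toReal_lintegral_W i)

lemma isFiniteMeasure_of_lintegral_W_ne_top (hA : AssumptionA S W ν η a) {μ : Measure α}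
    (hμW : ∫⁻ x, ENNReal.ofReal (W x) ∂μ ≠ ∞) : IsFiniteMeasure μ := by
  refine ⟨lt_of_le_of_lt ?_ hμW.lt_top⟩
  calc μ Set.univ = ∫⁻ _, 1 ∂μ := lintegral_one.symm
    _ ≤ _ := lintegral_mono fun x => ENNReal.one_le_ofReal.2 (hA.one_le_W x)

lemma toReal_theta0_pos (hA : AssumptionA S W ν η a) : 0 < (theta0 S).toReal :=
  ENNReal.toReal_pos hA.theta0_pos.ne' (hA.theta0_le_one.trans_lt one_lt_top).ne

lemma rescaled_mass_le (hA : AssumptionA S W ν η a) {n : ℕ} (hn : 1 ≤ n) (x : α) :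
    ((theta0 S).toReal)⁻¹ ^ n * (n : ℝ) ^ (-jfun S x) * (S n x Set.univ).toReal ≤
      ∑' i, η i x + a n * W x := by
  have := hA.nu_prob
  have h := hA.approx (fun _ => 1) measurable_const 1 zero_le_one
    (fun y => by simpa using hA.one_le_W y) n hn x
  simp only [integral_const, smul_eq_mul, mul_one, probReal_univ] at h
  exact le_add_of_sub_left_le (le_abs_self _ |>.trans h)

-- By (A) with `f = 1` the mass rescaled by `n^{-j_S(x)}` stays bounded, so one more factor `1/n`
-- sends it to `0`.
lemma polyRateSet_nonempty (hS : IsSubMarkovSemigroup S) (hA : AssumptionA S W ν η a)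
    (x : α) : (polyRateSet S x).Nonempty := by
  refine ⟨jfun S x + 1, by linarith [hA.jfun_nonneg x], ?_⟩
  have hθ := hA.toReal_theta0_pos
  have hmass : ∀ n, S n x Set.univ ≠ ∞ := fun n => ((hS.2.2 n x).trans_lt one_lt_top).ne
  have hlim : Tendsto (fun n : ℕ => ENNReal.ofReal ((∑' i, η i x + a n * W x) / n)) atTop
      (nhds 0) := by
    rw [← ENNReal.ofReal_zero]
    exact ENNReal.tendsto_ofReal ((tendsto_const_nhds.add (hA.a_tendsto.mul_const (W x))).div_atTop
      tendsto_natCast_atTop_atTop)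
  refine (tendsto_of_tendsto_of_tendsto_of_le_of_le' tendsto_const_nhds hlim
    (Eventually.of_forall fun _ => zero_le) ?_).liminf_eq
  filter_upwards [eventually_ge_atTop 1] with n hn
  have hn0 : (0 : ℝ) < n := by exact_mod_cast hn
  have hθn : (theta0 S)⁻¹ ^ n = ENNReal.ofReal (((theta0 S).toReal)⁻¹ ^ n) := by
    rw [ENNReal.ofReal_pow (inv_nonneg.2 hθ.le), ENNReal.ofReal_inv_of_pos hθ,
      ENNReal.ofReal_toReal (hA.theta0_le_one.trans_lt one_lt_top).ne]
  rw [← ENNReal.ofReal_natCast, ENNReal.ofReal_rpow_of_pos hn0, hθn,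
    ← ENNReal.ofReal_toReal (hmass n), ← ENNReal.ofReal_mul (by positivity),
    ← ENNReal.ofReal_mul (by positivity)]
  refine ENNReal.ofReal_le_ofReal ?_
  rw [neg_add, ← sub_eq_add_neg, Real.rpow_sub_one hn0.ne']
  calc (n : ℝ) ^ (-jfun S x) / n * (((theta0 S).toReal)⁻¹ ^ n) * (S n x Set.univ).toReal
      = ((theta0 S).toReal)⁻¹ ^ n * (n : ℝ) ^ (-jfun S x) * (S n x Set.univ).toReal / n := by
        ring
    _ ≤ _ := by gcongr; exact hA.rescaled_mass_le hn x

lemma measurable_jfun (hS : IsSubMarkovSemigroup S) (hA : AssumptionA S W ν η a) :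
    Measurable (jfun S) :=
  measurable_jfun_of_nonempty (hA.polyRateSet_nonempty hS)

variable [Countable I] {ρ : Measure α}

lemma integrable_tsum_eta_mul (hA : AssumptionA S W ν η a) (hW : Integrable W ρ) {c : I → ℝ}
    (hc : ∀ i, |c i| ≤ 1) : Integrable (fun x => ∑' i, η i x * c i) ρ := by
  obtain ⟨C, hC⟩ := hA.exists_tsum_eta_le
  refine (hW.const_mul C).mono' ?_ (ae_of_all _ fun x => ?_)
  · exact (measurable_tsum_of_summable (fun i => (hA.eta_meas i).mul_const (c i))
      (hA.summable_eta_mul · hc)).aestronglyMeasurable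
  · exact (hA.abs_tsum_eta_mul_le x hc).trans (hC x)

lemma integrable_tsum_eta (hA : AssumptionA S W ν η a) (hW : Integrable W ρ) :
    Integrable (fun x => ∑' i, η i x) ρ := by
  simpa using hA.integrable_tsum_eta_mul hW (c := 1) (by simp)

lemma integral_tsum_eta_mul (hA : AssumptionA S W ν η a) (hW : Integrable W ρ) {c : I → ℝ}
    (hc : ∀ i, |c i| ≤ 1) :
    ∫ x, ∑' i, η i x * c i ∂ρ = ∑' i, (∫ x, η i x ∂ρ) * c i := by
  have hfin : ∑' i, ∫⁻ x, ‖η i x * c i‖ₑ ∂ρ ≠ ∞ := by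
    refine ne_top_of_le_ne_top ?_ (ENNReal.tsum_le_tsum fun i =>
      lintegral_mono fun x => (?_ : ‖η i x * c i‖ₑ ≤ ENNReal.ofReal (η i x)))
    · rw [← lintegral_tsum fun i => (hA.eta_meas i).ennreal_ofReal.aemeasurable]
      simp_rw [← ENNReal.ofReal_tsum_of_nonneg (hA.eta_nonneg · _) (hA.summable_eta _)]
      exact (hA.integrable_tsum_eta hW).lintegral_lt_top.ne
    · rw [← ofReal_norm, Real.norm_eq_abs, abs_mul, abs_of_nonneg (hA.eta_nonneg i x)]
      exact ENNReal.ofReal_le_ofReal (mul_le_of_le_one_right (hA.eta_nonneg i x) (hc i))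
  rw [integral_tsum (fun i => ((hA.eta_meas i).mul_const (c i)).aestronglyMeasurable) hfin]
  simp_rw [integral_mul_const]

lemma integral_tsum_eta (hA : AssumptionA S W ν η a) (hW : Integrable W ρ) :
    ∫ x, ∑' i, η i x ∂ρ = ∑' i, ∫ x, η i x ∂ρ := by
  simpa using hA.integral_tsum_eta_mul hW (c := 1) (by simp)

lemma abs_integral_rescaled_sub_le (hA : AssumptionA S W ν η a) (hj : Measurable (jfun S))
    (hW : Integrable W ρ) {n : ℕ} (hn : 1 ≤ n) {φ : α → ℝ} (hφ : Measurable φ)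
    (hφ1 : ∀ x, |φ x| ≤ 1) :
    |∫ x, ((theta0 S).toReal)⁻¹ ^ n * (n : ℝ) ^ (-jfun S x) * ∫ y, φ y ∂(S n x) ∂ρ -
        ∑' i, (∫ x, η i x ∂ρ) * ∫ y, φ y ∂(ν i)| ≤ a n * ∫ x, W x ∂ρ := by
  have := hA.nu_prob
  have hc : ∀ i, |∫ y, φ y ∂(ν i)| ≤ 1 := fun i => by
    simpa using norm_integral_le_of_norm_le_const (μ := ν i) (f := φ) (ae_of_all _ hφ1)
  have hF : Measurable fun x => ((theta0 S).toReal)⁻¹ ^ n * (n : ℝ) ^ (-jfun S x) *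
      ∫ y, φ y ∂(S n x) :=
    (measurable_const.mul (measurable_const.pow hj.neg)).mul
      hφ.stronglyMeasurable.integral_kernel.measurable
  have hT := hA.integrable_tsum_eta_mul hW hc
  have hpt := fun x => hA.approx φ hφ 1 zero_le_one
    (fun y => by simpa using (hφ1 y).trans (hA.one_le_W y)) n hn x
  simp only [mul_one] at hpt
  have hD := (hW.const_mul (a n)).mono' (hF.aestronglyMeasurable.sub hT.1) (ae_of_all _ hpt)
  rw [← hA.integral_tsum_eta_mul hW hc, ← integral_sub (by simpa using hD.add hT) hT,
    ← integral_const_mul]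
  exact abs_integral_le_integral_abs.trans (integral_mono hD.abs (hW.const_mul _) hpt)

lemma integral_tsum_eta_polyWeighted_pos (hA : AssumptionA S W ν η a) {n : ℕ} (hn : 1 ≤ n)
    {μ : Measure α}
    (hW : Integrable W (polyWeighted S n μ)) (hμη : 0 < ∫⁻ x, ENNReal.ofReal (∑' i, η i x) ∂μ) :
    0 < ∫ x, ∑' i, η i x ∂(polyWeighted S n μ) := by
  have hη := hA.integrable_tsum_eta hW
  rw [integral_eq_lintegral_of_nonneg_ae (ae_of_all _ fun x => tsum_nonneg (hA.eta_nonneg · x))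
    hη.1]
  exact ENNReal.toReal_pos
    (hμη.trans_le (lintegral_mono' (le_polyWeighted hn hA.jfun_nonneg) le_rfl)).ne'
    hη.lintegral_lt_top.ne

lemma abs_integral_comp_sub_le (hA : AssumptionA S W ν η a) (hj : Measurable (jfun S))
    {n : ℕ} (hn : 1 ≤ n) {μ : Measure α} [IsFiniteMeasure μ] [IsFiniteKernel (S n)]
    (hW : Integrable W (polyWeighted S n μ)) {φ : α → ℝ} (hφ : Measurable φ)
    (hφ1 : ∀ x, |φ x| ≤ 1) :
    |((theta0 S).toReal)⁻¹ ^ n * ∫ y, φ y ∂(S n ∘ₘ μ) -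
        ∑' i, (∫ x, η i x ∂(polyWeighted S n μ)) * ∫ y, φ y ∂(ν i)| ≤
      a n * ∫ x, W x ∂(polyWeighted S n μ) := by
  rw [← integral_polyWeighted_rescaled hj (by omega) _ hφ hφ1]
  exact hA.abs_integral_rescaled_sub_le hj hW hn hφ hφ1

end AssumptionA

/-- Under Assumption (A), for every `n ≥ 1` and every nonnegative
`μ ∈ M₊(W_S)` with `μ(η_S) > 0` and `μ(n^{j_S(·)} W_S) < ∞`, the total variation distance
(expressed through test functions bounded by `1`) between `ℙ_μ(X_n ∈ · | n < τ_∂)` and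
`(Σ_i μ(n^{j_S(·)} η_{S,i}) ν_{S,i}) / (Σ_i μ(n^{j_S(·)} η_{S,i}))` is at most
`2 α_{S,n} μ(n^{j_S(·)} W_S) / μ(n^{j_S(·)} η_S)`. -/
theorem conditional_distribution_total_variation_bound
    (S : ℕ → Kernel α α) (hS : IsSubMarkovSemigroup S)
    {I : Type} {W : α → ℝ} {ν : I → Measure α} {η : I → α → ℝ} {a : ℕ → ℝ}
    (hA : AssumptionA S W ν η a) :
    ∀ n : ℕ, 1 ≤ n → ∀ μ : Measure α, μ ≠ 0 →
      (∫⁻ x, ENNReal.ofReal (W x) ∂μ) ≠ ∞ →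
      (0 < ∫⁻ x, ENNReal.ofReal (∑' i, η i x) ∂μ) →
      (∫⁻ x, (n : ℝ≥0∞) ^ (jfun S x) * ENNReal.ofReal (W x) ∂μ) ≠ ∞ →
      ∀ f : α → ℝ, Measurable f → (∀ x, |f x| ≤ 1) →
        |(∫ y, f y ∂(Measure.bind μ (fun x => S n x))) / (kmass S n μ).toReal -
            (∑' i, (∫⁻ x, (n : ℝ≥0∞) ^ (jfun S x) * ENNReal.ofReal (η i x) ∂μ).toReal *
                ∫ y, f y ∂(ν i)) /
              (∑' i, (∫⁻ x, (n : ℝ≥0∞) ^ (jfun S x) * ENNReal.ofReal (η i x) ∂μ).toReal)| ≤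
          2 * a n * (∫⁻ x, (n : ℝ≥0∞) ^ (jfun S x) * ENNReal.ofReal (W x) ∂μ).toReal /
            (∫⁻ x, (n : ℝ≥0∞) ^ (jfun S x) * ENNReal.ofReal (∑' i, η i x) ∂μ).toReal := by
  intro n hn μ _ hμW hμη hμjW f hf hf1
  have := hA.countable
  have := hA.nu_prob
  have := hS.isFiniteKernel n
  have := hA.isFiniteMeasure_of_lintegral_W_ne_top hμW
  have hj := hA.measurable_jfun hS
  have hW0 : ∀ x, 0 ≤ W x := fun x => zero_le_one.trans (hA.one_le_W x)
  simp only [toReal_lintegral_eq_integral_polyWeighted hj hA.W_meas hW0,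
    toReal_lintegral_eq_integral_polyWeighted hj (hA.eta_meas _) (hA.eta_nonneg _),
    toReal_lintegral_eq_integral_polyWeighted hj
      (measurable_tsum_of_summable hA.eta_meas hA.summable_eta)
      fun x => tsum_nonneg (hA.eta_nonneg · x)]
  have hρW := integrable_polyWeighted hj hA.W_meas hW0 hμjW
  have hpos := hA.integral_tsum_eta_polyWeighted_pos hn hρW hμη
  have hθ : 0 < ((theta0 S).toReal)⁻¹ ^ n := pow_pos (inv_pos.2 hA.toReal_theta0_pos) n
  have hf' := hA.abs_integral_comp_sub_le hj hn hρW hf hf1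
  have h1' := hA.abs_integral_comp_sub_le hj hn hρW measurable_const (φ := fun _ => 1) (by simp)
  simp only [integral_const, smul_eq_mul, mul_one, probReal_univ] at h1'
  have hmass : |∫ y, f y ∂(S n ∘ₘ μ)| ≤ (S n ∘ₘ μ).real Set.univ := by
    simpa using norm_integral_le_of_norm_le_const (f := f) (ae_of_all (S n ∘ₘ μ) hf1)
  rw [hA.integral_tsum_eta hρW] at hpos ⊢
  rw [← mul_div_mul_left _ _ hθ.ne', mul_assoc]
  refine abs_div_sub_div_le hpos ?_ hf' h1'
  rw [abs_mul, abs_of_pos hθ]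
  exact mul_le_mul_of_nonneg_left hmass hθ.le
end
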